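/- arXiv:1604.05856 — 2 statements merged into one kernel-verified Lean document; each statement's English description precedes it below -/
import Mathlib

section
/- Let G be a finite connected simple graph with n vertices and m edges, w a complex weighted matrix of G (i.e. an n×n complex matrix W with W_{uv} = 0 whenever (u,v) ∉ D(G)), B_w the weighted arc matrix, J₀ the arc-inversion matrix, and D_w the weighted degree matrix. Then for every t ∈ ℂ, det(I_{2m} − t·(B_w − J₀)) = (1 − t²)^{m−n} · det(I_n − t·W + t²·(D_w − I_n)). -/
noncomputable section

open Finset

variable {V : Type*}

/-- The weighted arc matrix B_w: `(B_w) e f = w(f) = W_{o(f) t(f)}` if `t(e) = o(f)`, else 0. -/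
def weightedArcMatrix [Fintype V] [DecidableEq V] (G : SimpleGraph V) [DecidableRel G.Adj]
    (W : Matrix V V ℂ) : Matrix G.Dart G.Dart ℂ := fun e f =>
  if e.toProd.2 = f.toProd.1 then W f.toProd.1 f.toProd.2 else 0

/-- The arc-inversion matrix J₀. -/
def arcInvMatrix [Fintype V] [DecidableEq V] (G : SimpleGraph V) [DecidableRel G.Adj] :
    Matrix G.Dart G.Dart ℂ := fun e f =>
  if f = e.symm then 1 else 0

/-- The weighted degree matrix D_w: diagonal, with `(D_w)_{uu} = Σ_{e : o(e) = u} w(e)`. -/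
def weightedDegMatrix [Fintype V] [DecidableEq V] (G : SimpleGraph V) [DecidableRel G.Adj]
    (W : Matrix V V ℂ) : Matrix V V ℂ :=
  Matrix.diagonal fun u =>
    ∑ e : G.Dart, if e.toProd.1 = u then W e.toProd.1 e.toProd.2 else 0

section Aux

variable [Fintype V] [DecidableEq V] (G : SimpleGraph V) [DecidableRel G.Adj]

/-- "positive" darts under an arbitrary enumeration of the vertices. -/
def posDart (d : G.Dart) : Prop :=
  (Fintype.equivFin V) d.toProd.1 < (Fintype.equivFin V) d.toProd.2

instance : DecidablePred (posDart G) := fun d => by unfold posDart; infer_instance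

lemma posDart_symm_of_not {d : G.Dart} (h : ¬ posDart G d) : posDart G d.symm := by
  unfold posDart at *
  have hne : d.toProd.1 ≠ d.toProd.2 := d.adj.ne
  have : (Fintype.equivFin V) d.toProd.1 ≠ (Fintype.equivFin V) d.toProd.2 :=
    fun hc => hne ((Fintype.equivFin V).injective hc)
  simp only [SimpleGraph.Dart.symm_toProd, Prod.fst_swap, Prod.snd_swap]
  omega
  
lemma not_posDart_symm {d : G.Dart} (h : posDart G d) : ¬ posDart G d.symm := by
  unfold posDart at *
  simp only [SimpleGraph.Dart.symm_toProd, Prod.fst_swap, Prod.snd_swap]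
  omega

lemma posDart_ne_symm {d f : G.Dart} (hd : posDart G d) (hf : posDart G f) : d ≠ f.symm := by
  intro h
  exact not_posDart_symm G hf (h ▸ hd)

/-- darts are two copies of the positive darts -/
def dartEquiv : G.Dart ≃ {d : G.Dart // posDart G d} ⊕ {d : G.Dart // posDart G d} where
  toFun d := if h : posDart G d then .inl ⟨d, h⟩ else .inr ⟨d.symm, posDart_symm_of_not G h⟩
  invFun x := Sum.elim (fun s => s.1) (fun s => s.1.symm) x
  left_inv d := by
    by_cases h : posDart G d <;> simp [h]
  right_inv x := by
    rcases x with s | s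
    · simp [s.2]
    · have := not_posDart_symm G s.2
      simp [this]

lemma card_posDart (m : ℕ) (hm : m = G.edgeFinset.card) :
    Fintype.card {d : G.Dart // posDart G d} = m := by
  have h1 := Fintype.card_congr (dartEquiv G)
  rw [SimpleGraph.dart_card_eq_twice_card_edges, Fintype.card_sum, ← hm] at h1
  omega

lemma det_one_sub_smul_arcInv (t : ℂ) (m : ℕ) (hm : m = G.edgeFinset.card) :
    ((1 : Matrix G.Dart G.Dart ℂ) - t • arcInvMatrix G).det = (1 - t ^ 2) ^ m := by
  classical
  rw [← Matrix.det_submatrix_equiv_self (dartEquiv G).symm]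
  have hsub : ((1 : Matrix G.Dart G.Dart ℂ) - t • arcInvMatrix G).submatrix
      (dartEquiv G).symm (dartEquiv G).symm =
      Matrix.fromBlocks 1 (-(t • 1)) (-(t • 1)) 1 := by
    ext x y
    rcases x with s | s <;> rcases y with s' | s' <;>
      simp only [Matrix.submatrix_apply, dartEquiv, Equiv.coe_fn_symm_mk, Sum.elim_inl,
        Sum.elim_inr, Matrix.sub_apply, Matrix.smul_apply, arcInvMatrix,
        Matrix.fromBlocks_apply₁₁, Matrix.fromBlocks_apply₁₂, Matrix.fromBlocks_apply₂₁,
        Matrix.fromBlocks_apply₂₂, Matrix.one_apply, Matrix.neg_apply, smul_eq_mul]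
    -- entry is `(if row = col then 1 else 0) - t * (if col = row.symm then 1 else 0)`
    · -- rows/cols: s.1, s'.1, both positive
      rw [if_neg (posDart_ne_symm G s'.2 s.2)]
      by_cases h : s = s'
      · subst h; simp
      · rw [if_neg (fun hc => h (Subtype.ext hc)), if_neg h]; ring
    · -- row s.1, col s'.1.symm
      rw [if_neg (posDart_ne_symm G s.2 s'.2)]
      have h2 : (↑s' : G.Dart).symm = (↑s : G.Dart).symm ↔ s = s' := by
        constructor
        · intro h
          have := congrArg SimpleGraph.Dart.symm h
          simp only [SimpleGraph.Dart.symm_symm] at this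
          exact (Subtype.ext this).symm
        · intro h; rw [h]
      by_cases h : s = s'
      · subst h; simp
      · rw [if_neg (fun hc => h (h2.1 hc)), if_neg h]; ring
    · -- row s.1.symm, col s'.1
      have h1 : (↑s : G.Dart).symm ≠ ↑s' := fun hc => posDart_ne_symm G s'.2 s.2 hc.symm
      rw [if_neg h1]
      have h2 : (↑s' : G.Dart) = (↑s : G.Dart).symm.symm ↔ s = s' := by
        rw [SimpleGraph.Dart.symm_symm]
        exact ⟨fun h => Subtype.ext h.symm, fun h => by rw [h]⟩
      by_cases h : s = s'
      · subst h; simp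
      · rw [if_neg (fun hc => h (h2.1 hc)), if_neg h]; ring
    · -- row s.1.symm, col s'.1.symm
      have h1 : (↑s' : G.Dart).symm ≠ (↑s : G.Dart).symm.symm := by
        rw [SimpleGraph.Dart.symm_symm]
        exact fun hc => posDart_ne_symm G s.2 s'.2 hc.symm
      rw [if_neg h1]
      have h2 : (↑s : G.Dart).symm = (↑s' : G.Dart).symm ↔ s = s' := by
        constructor
        · intro h
          have := congrArg SimpleGraph.Dart.symm h
          simp only [SimpleGraph.Dart.symm_symm] at this
          exact Subtype.ext this
        · intro h; rw [h]
      by_cases h : s = s'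
      · subst h; simp
      · rw [if_neg (fun hc => h (h2.1 hc)), if_neg h]; ring
  rw [hsub, Matrix.det_fromBlocks_one₂₂]
  have : (1 : Matrix {d : G.Dart // posDart G d} {d : G.Dart // posDart G d} ℂ) -
      -(t • 1) * -(t • 1) = (1 - t ^ 2) • 1 := by
    rw [Matrix.neg_mul, Matrix.mul_neg, neg_neg, Matrix.smul_mul, Matrix.mul_smul, smul_smul,
      Matrix.mul_one, sub_smul, one_smul]
    congr 1
    rw [pow_two]
  rw [this, Matrix.det_smul, Matrix.det_one, mul_one, card_posDart G m hm]

variable (W : Matrix V V ℂ)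

/-- terminal incidence matrix -/
def matK : Matrix G.Dart V ℂ := fun e v => if e.toProd.2 = v then 1 else 0

/-- origin incidence matrix -/
def matK' : Matrix G.Dart V ℂ := fun e v => if e.toProd.1 = v then 1 else 0

/-- weighted origin incidence matrix -/
def matL : Matrix V G.Dart ℂ := fun v f => if f.toProd.1 = v then W f.toProd.1 f.toProd.2 else 0

lemma matB_eq : weightedArcMatrix G W = matK G * matL G W := by
  ext e f
  rw [Matrix.mul_apply]
  simp only [matK, matL, ite_mul, one_mul, zero_mul, weightedArcMatrix]
  rw [Finset.sum_ite_eq Finset.univ e.toProd.2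
    (fun v => if f.toProd.1 = v then W f.toProd.1 f.toProd.2 else 0)]
  simp [eq_comm]

lemma matJK : arcInvMatrix G * matK G = matK' G := by
  ext e v
  rw [Matrix.mul_apply]
  simp only [arcInvMatrix, matK, matK', ite_mul, one_mul, zero_mul]
  rw [Finset.sum_ite_eq' Finset.univ e.symm (fun g => if g.toProd.2 = v then (1 : ℂ) else 0)]
  simp

lemma matJJ : arcInvMatrix G * arcInvMatrix G = 1 := by
  ext e f
  rw [Matrix.mul_apply]
  simp only [arcInvMatrix, ite_mul, one_mul, zero_mul]
  rw [Finset.sum_ite_eq' Finset.univ e.symm (fun g => if f = g.symm then (1 : ℂ) else 0)]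
  simp [Matrix.one_apply, eq_comm]

lemma matLK (hW : ∀ u v : V, ¬G.Adj u v → W u v = 0) : matL G W * matK G = W := by
  ext u v
  rw [Matrix.mul_apply]
  by_cases h : G.Adj u v
  · rw [Finset.sum_eq_single (SimpleGraph.Dart.mk (u, v) h)]
    · simp [matK, matL]
    · intro f _ hf
      simp only [matK, matL, ite_mul, one_mul, zero_mul, mul_ite, mul_one, mul_zero]
      by_cases h1 : f.toProd.1 = u
      · by_cases h2 : f.toProd.2 = v
        · exact absurd (SimpleGraph.Dart.ext _ _ (Prod.ext h1 h2)) hf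
        · simp [h1, h2]
      · simp [h1]
    · intro hx; exact absurd (Finset.mem_univ _) hx
  · rw [hW u v h]
    apply Finset.sum_eq_zero
    intro f _
    simp only [matK, matL, mul_ite, mul_one, mul_zero]
    by_cases h1 : f.toProd.1 = u
    · by_cases h2 : f.toProd.2 = v
      · exact absurd (h1 ▸ h2 ▸ f.adj) h
      · simp [h1, h2]
    · simp [h1]

lemma matLK' : matL G W * matK' G = weightedDegMatrix G W := by
  ext u v
  rw [Matrix.mul_apply]
  simp only [matL, matK', weightedDegMatrix, Matrix.diagonal_apply, mul_ite, mul_one, mul_zero]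
  by_cases h : u = v
  · subst h
    rw [if_pos rfl]
    apply Finset.sum_congr rfl
    intro f _
    by_cases h1 : f.toProd.1 = u <;> simp [h1]
  · rw [if_neg h]
    apply Finset.sum_eq_zero
    intro f _
    by_cases h2 : f.toProd.1 = v
    · rw [if_pos h2, if_neg (fun h1 => h (h1.symm.trans h2))]
    · rw [if_neg h2]

lemma key_identity (t : ℂ) :
    ((1 : Matrix G.Dart G.Dart ℂ) - t • arcInvMatrix G) *
        ((1 : Matrix G.Dart G.Dart ℂ) - t • (weightedArcMatrix G W - arcInvMatrix G)) =
      (1 - t ^ 2) • (1 : Matrix G.Dart G.Dart ℂ) -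
        t • ((matK G - t • matK' G) * matL G W) := by
  have h1 : arcInvMatrix G * (matK G * matL G W) = matK' G * matL G W := by
    rw [← Matrix.mul_assoc, matJK]
  rw [matB_eq]
  simp only [Matrix.mul_sub, Matrix.sub_mul, Matrix.mul_smul, Matrix.smul_mul, Matrix.mul_one,
    Matrix.one_mul, smul_smul, smul_sub, h1, matJJ, sub_smul, one_smul]
  module

theorem core (t : ℂ) (ht : 1 - t ^ 2 ≠ 0) (n m : ℕ) (hn : n = Fintype.card V)
    (hm : m = G.edgeFinset.card) (hW : ∀ u v : V, ¬G.Adj u v → W u v = 0) :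
    (1 - t ^ 2) ^ n *
        ((1 : Matrix G.Dart G.Dart ℂ) -
          t • (weightedArcMatrix G W - arcInvMatrix G)).det =
      (1 - t ^ 2) ^ m *
        ((1 : Matrix V V ℂ) - t • W + t ^ 2 • (weightedDegMatrix G W - 1)).det := by
  classical
  set a : ℂ := 1 - t ^ 2 with ha_def
  set c : ℂ := t / a with hc_def
  have hac : a * c = t := by
    rw [hc_def]; field_simp
  -- the small determinant
  set d0 : ℂ := ((1 : Matrix V V ℂ) - c • (W - t • weightedDegMatrix G W)).det with hd0
  -- step 1: (1 - tJ) M = a•1 - t•((K - tK')L), determinants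
  have step1 : a ^ m *
      ((1 : Matrix G.Dart G.Dart ℂ) - t • (weightedArcMatrix G W - arcInvMatrix G)).det =
      ((a • (1 : Matrix G.Dart G.Dart ℂ) -
        t • ((matK G - t • matK' G) * matL G W))).det := by
    rw [← det_one_sub_smul_arcInv G t m hm, ← Matrix.det_mul, key_identity]
  -- step 2: pull out a from the big determinant
  have factor : a • ((1 : Matrix G.Dart G.Dart ℂ) -
        c • ((matK G - t • matK' G) * matL G W)) =
      a • (1 : Matrix G.Dart G.Dart ℂ) - t • ((matK G - t • matK' G) * matL G W) := by
    rw [smul_sub, smul_smul, hac]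
  have step2 : (a • (1 : Matrix G.Dart G.Dart ℂ) -
        t • ((matK G - t • matK' G) * matL G W)).det =
      a ^ (2 * m) * ((1 : Matrix G.Dart G.Dart ℂ) -
        c • ((matK G - t • matK' G) * matL G W)).det := by
    rw [← factor, Matrix.det_smul, SimpleGraph.dart_card_eq_twice_card_edges, ← hm]
  -- step 3: Weinstein–Aronszajn
  have step3 : ((1 : Matrix G.Dart G.Dart ℂ) -
        c • ((matK G - t • matK' G) * matL G W)).det = d0 := by
    have e1 : (1 : Matrix G.Dart G.Dart ℂ) -
        c • ((matK G - t • matK' G) * matL G W) =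
        1 + (-(c • (matK G - t • matK' G))) * matL G W := by
      rw [Matrix.neg_mul, Matrix.smul_mul, sub_eq_add_neg]
    rw [e1, Matrix.det_one_add_mul_comm, hd0]
    congr 1
    rw [Matrix.mul_neg, Matrix.mul_smul, ← sub_eq_add_neg]
    congr 2
    rw [Matrix.mul_sub, Matrix.mul_smul, matLK G W hW, matLK' G W]
  -- step 4: the vertex-side determinant
  have step4 : ((1 : Matrix V V ℂ) - t • W + t ^ 2 • (weightedDegMatrix G W - 1)).det =
      a ^ n * d0 := by
    have e2 : (1 : Matrix V V ℂ) - t • W + t ^ 2 • (weightedDegMatrix G W - 1) =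
        a • ((1 : Matrix V V ℂ) - c • (W - t • weightedDegMatrix G W)) := by
      have h3 : a • ((1 : Matrix V V ℂ) - c • (W - t • weightedDegMatrix G W)) =
          a • (1 : Matrix V V ℂ) - (t • W - (t * t) • weightedDegMatrix G W) := by
        rw [smul_sub, smul_smul, hac, smul_sub, smul_smul]
      rw [h3, ha_def, sub_smul, one_smul]
      module
    rw [e2, Matrix.det_smul, ← hn, hd0]
  -- combine
  have ha : a ≠ 0 := ht
  apply mul_left_cancel₀ (pow_ne_zero m ha)
  calc a ^ m * (a ^ n *
        ((1 : Matrix G.Dart G.Dart ℂ) -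
          t • (weightedArcMatrix G W - arcInvMatrix G)).det)
      = a ^ n * (a ^ m *
        ((1 : Matrix G.Dart G.Dart ℂ) -
          t • (weightedArcMatrix G W - arcInvMatrix G)).det) := by ring
    _ = a ^ n * (a ^ (2 * m) * d0) := by rw [step1, step2, step3]
    _ = a ^ m * (a ^ m * (a ^ n * d0)) := by rw [two_mul, pow_add]; ring
    _ = a ^ m * (a ^ m *
        ((1 : Matrix V V ℂ) - t • W + t ^ 2 • (weightedDegMatrix G W - 1)).det) := by
      rw [step4]

end Aux

/-- Sato: Bass-type determinant expression for the second weighted zeta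
function: det(I_{2m} − t(B_w − J₀)) = (1−t²)^{m−n}·det(I_n − tW + t²(D_w − I_n))
(stated multiplied through by (1−t²)^n to avoid negative exponents). -/
theorem second_weighted_zeta_determinant [Fintype V] [DecidableEq V] (G : SimpleGraph V)
    [DecidableRel G.Adj] (hG : G.Connected) (n m : ℕ) (hn : n = Fintype.card V)
    (hm : m = G.edgeFinset.card) (W : Matrix V V ℂ)
    (hW : ∀ u v : V, ¬G.Adj u v → W u v = 0) :
    ∀ t : ℂ,
      (1 - t ^ 2) ^ n *
          ((1 : Matrix G.Dart G.Dart ℂ) -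
            t • (weightedArcMatrix G W - arcInvMatrix G)).det =
        (1 - t ^ 2) ^ m *
          ((1 : Matrix V V ℂ) - t • W + t ^ 2 • (weightedDegMatrix G W - 1)).det := by
  intro t
  set f : ℂ → ℂ := fun s => (1 - s ^ 2) ^ n *
      ((1 : Matrix G.Dart G.Dart ℂ) -
        s • (weightedArcMatrix G W - arcInvMatrix G)).det with hf_def
  set g : ℂ → ℂ := fun s => (1 - s ^ 2) ^ m *
      ((1 : Matrix V V ℂ) - s • W + s ^ 2 • (weightedDegMatrix G W - 1)).det with hg_def
  have hf : Continuous f := by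
    apply Continuous.mul
    · exact (continuous_const.sub ((continuous_id.pow 2))).pow n
    · exact Continuous.matrix_det (continuous_const.sub (continuous_id.smul continuous_const))
  have hg : Continuous g := by
    apply Continuous.mul
    · exact (continuous_const.sub ((continuous_id.pow 2))).pow m
    · exact Continuous.matrix_det
        (((continuous_const.sub (continuous_id.smul continuous_const)).add
          ((continuous_id.pow 2).smul continuous_const)))
  have hdense : Dense {s : ℂ | 1 - s ^ 2 = 0}ᶜ := by
    have hsub : {s : ℂ | 1 - s ^ 2 = 0} ⊆ {1, -1} := by
      intro s hs
      simp only [Set.mem_setOf_eq] at hs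
      have h2 : (1 - s) * (1 + s) = 0 := by linear_combination hs
      simp only [Set.mem_insert_iff, Set.mem_singleton_iff]
      rcases mul_eq_zero.1 h2 with h | h
      · left; linear_combination -h
      · right; linear_combination h
    have hcount : {s : ℂ | 1 - s ^ 2 = 0}.Countable :=
      (((Set.finite_singleton (-1 : ℂ)).insert 1).subset hsub).countable
    exact hcount.dense_compl ℂ
  have heq : f = g := by
    apply hf.ext_on hdense hg
    intro s hs
    simp only [Set.mem_compl_iff, Set.mem_setOf_eq] at hs
    exact core G W s hs n m hn hm hW
  exact congrFun heq t
end
end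

section
/- Let G be a finite connected simple graph with n vertices and m edges, w : D(G) → ℍ an arc weight with matrices K, L, J₀ as below. Then for every t ∈ ℂ with t² ≠ 1, det(I_{4m} − t·ψ(K·ᵀL − J₀)) = (1 − t²)^{2m} · det(I_{2n} − t·ψ(ᵀL)·(I_{4m} + t·ψ(J₀))⁻¹·ψ(K)), where I_{4m} + t·ψ(J₀) is invertible. -/
noncomputable section

open Matrix

/-- Simplex part of a quaternion: `q = Sc q + j * Pc q`. -/
def Sc (q : Quaternion ℝ) : ℂ := ⟨q.re, q.imI⟩

/-- Perplex part of a quaternion: `q = Sc q + j * Pc q`. -/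
def Pc (q : Quaternion ℝ) : ℂ := ⟨q.imJ, -q.imK⟩

/-- The map ψ sending a quaternionic matrix `M = M^S + j·M^P` (symplectic decomposition)
to the complex block matrix `[[M^S, -conj(M^P)], [M^P, conj(M^S)]]`. -/
def psi {I J : Type*} (M : Matrix I J (Quaternion ℝ)) :
    Matrix (I ⊕ I) (J ⊕ J) ℂ :=
  Matrix.fromBlocks (M.map Sc) (-((M.map Pc).map (starRingEnd ℂ)))
    (M.map Pc) ((M.map Sc).map (starRingEnd ℂ))

variable {V : Type*}

/-- The quaternionic weighted matrix W: `W u v = w((u,v))` if `(u,v)` is an arc, else 0. -/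
def quatWeightMatrix [Fintype V] [DecidableEq V] (G : SimpleGraph V) [DecidableRel G.Adj]
    (w : G.Dart → Quaternion ℝ) : Matrix V V (Quaternion ℝ) := fun u v =>
  if h : G.Adj u v then w ⟨(u, v), h⟩ else 0

/-- The quaternionic weighted arc matrix B_w: `(B_w) e f = w(f)` if `t(e) = o(f)`, else 0. -/
def quatArcMatrix [Fintype V] [DecidableEq V] (G : SimpleGraph V) [DecidableRel G.Adj]
    (w : G.Dart → Quaternion ℝ) : Matrix G.Dart G.Dart (Quaternion ℝ) := fun e f =>
  if e.toProd.2 = f.toProd.1 then w f else 0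

/-- The quaternionic arc-inversion matrix J₀: `(J₀) e f = 1` if `f = e⁻¹`, else 0. -/
def quatArcInvMatrix [Fintype V] [DecidableEq V] (G : SimpleGraph V) [DecidableRel G.Adj] :
    Matrix G.Dart G.Dart (Quaternion ℝ) := fun e f =>
  if f = e.symm then 1 else 0

/-- The quaternionic weighted degree matrix D_w: diagonal with
`(D_w)_{uu} = Σ_{e : o(e) = u} w(e)`. -/
def quatDegMatrix [Fintype V] [DecidableEq V] (G : SimpleGraph V) [DecidableRel G.Adj]
    (w : G.Dart → Quaternion ℝ) : Matrix V V (Quaternion ℝ) :=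
  Matrix.diagonal fun u => ∑ e : G.Dart, if e.toProd.1 = u then w e else 0

/-- The 2m×n matrix K: `K e v = w(e)` if `o(e) = v`, else 0. -/
def quatKMatrix [Fintype V] [DecidableEq V] (G : SimpleGraph V) [DecidableRel G.Adj]
    (w : G.Dart → Quaternion ℝ) : Matrix G.Dart V (Quaternion ℝ) := fun e v =>
  if e.toProd.1 = v then w e else 0

/-- The 2m×n matrix L: `L e v = 1` if `t(e) = v`, else 0. -/
def quatLMatrix [Fintype V] [DecidableEq V] (G : SimpleGraph V) [DecidableRel G.Adj] :
    Matrix G.Dart V (Quaternion ℝ) := fun e v =>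
  if e.toProd.2 = v then 1 else 0

/-!
Since `psi` is additive and multiplicative, the left-hand side is `det (U - t ψ(K) ψ(ᵀL))` with
`U = 1 + t ψ(J₀)`, and the matrix determinant lemma reduces the claim to
`det U = (1 - t²)^{2m}`. As `J₀` is real, `ψ(J₀) = P ⊕ P` for the permutation matrix `P` of the
fixed-point-free involution `e ↦ e⁻¹`. From `P² = 1` we get `(1 + tP)(1 - tP) = (1 - t²)`, and
conjugating by the diagonal matrix of the signs of the darts in some orientation of `G` turns
`1 + tP` into `1 - tP`; hence `det (1 + tP)² = (1 - t²)^{2m}`.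
-/

lemma Sc_add (p q : Quaternion ℝ) : Sc (p + q) = Sc p + Sc q := by
  simp [Sc, Complex.ext_iff]

lemma Pc_add (p q : Quaternion ℝ) : Pc (p + q) = Pc p + Pc q := by
  simp only [Pc, Complex.ext_iff, Complex.add_re, Complex.add_im, Quaternion.imJ_add,
    Quaternion.imK_add, neg_add, and_self]

lemma Sc_mul (p q : Quaternion ℝ) :
    Sc (p * q) = Sc p * Sc q - starRingEnd ℂ (Pc p) * Pc q := by
  simp only [Sc, Pc, Complex.ext_iff, Complex.mul_re, Complex.mul_im, Complex.sub_re,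
    Complex.sub_im, Complex.conj_re, Complex.conj_im, Quaternion.re_mul, Quaternion.imI_mul]
  constructor <;> ring

lemma Pc_mul (p q : Quaternion ℝ) :
    Pc (p * q) = starRingEnd ℂ (Sc p) * Pc q + Pc p * Sc q := by
  simp only [Sc, Pc, Complex.ext_iff, Complex.mul_re, Complex.mul_im, Complex.add_re,
    Complex.add_im, Complex.conj_re, Complex.conj_im, Quaternion.imJ_mul, Quaternion.imK_mul]
  constructor <;> ring

lemma Sc_one : Sc 1 = 1 := Complex.ext Quaternion.re_one Quaternion.imI_one

lemma Pc_one : Pc 1 = 0 := Complex.ext Quaternion.imJ_one (neg_eq_zero.mpr Quaternion.imK_one)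

def ScAddHom : Quaternion ℝ →+ ℂ := AddMonoidHom.mk' Sc Sc_add

def PcAddHom : Quaternion ℝ →+ ℂ := AddMonoidHom.mk' Pc Pc_add

lemma Sc_zero : Sc 0 = 0 := map_zero ScAddHom

lemma Pc_zero : Pc 0 = 0 := map_zero PcAddHom

lemma Sc_sub (p q : Quaternion ℝ) : Sc (p - q) = Sc p - Sc q := map_sub ScAddHom p q

lemma Pc_sub (p q : Quaternion ℝ) : Pc (p - q) = Pc p - Pc q := map_sub PcAddHom p q

lemma Sc_sum {ι : Type*} (s : Finset ι) (f : ι → Quaternion ℝ) :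
    Sc (∑ x ∈ s, f x) = ∑ x ∈ s, Sc (f x) := map_sum ScAddHom f s

lemma Pc_sum {ι : Type*} (s : Finset ι) (f : ι → Quaternion ℝ) :
    Pc (∑ x ∈ s, f x) = ∑ x ∈ s, Pc (f x) := map_sum PcAddHom f s

section Psi

variable {I J : Type*}

lemma psi_sub (M N : Matrix I J (Quaternion ℝ)) : psi (M - N) = psi M - psi N := by
  ext (i | i) (j | j) <;> simp [psi, Sc_sub, Pc_sub, neg_add_eq_sub]

lemma psi_mul {K : Type*} [Fintype J] (M : Matrix I J (Quaternion ℝ))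
    (N : Matrix J K (Quaternion ℝ)) : psi (M * N) = psi M * psi N := by
  ext (i | i) (k | k) <;>
    simp only [psi, fromBlocks_apply₁₁, fromBlocks_apply₁₂, fromBlocks_apply₂₁,
      fromBlocks_apply₂₂, mul_apply, map_apply, Matrix.neg_apply, Fintype.sum_sum_type, Sc_sum,
      Pc_sum, Sc_mul, Pc_mul, map_sub, map_add, _root_.map_mul, map_sum,
      Complex.conj_conj, Finset.sum_sub_distrib, Finset.sum_add_distrib, Finset.sum_neg_distrib,
      neg_mul, mul_neg] <;>
    abel

lemma psi_permMatrix [DecidableEq I] (σ : Equiv.Perm I) :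
    psi (σ.permMatrix (Quaternion ℝ)) =
      fromBlocks (σ.permMatrix ℂ) 0 0 (σ.permMatrix ℂ) := by
  ext (i | i) (j | j) <;>
    simp [psi, apply_ite Sc, apply_ite Pc, Sc_one, Pc_one, Sc_zero, Pc_zero]

end Psi

section InvolutionDet

variable {ι R : Type*} [Fintype ι] [DecidableEq ι] [CommRing R]

lemma det_one_sub_smul_eq_det_one_add_smul {A D : Matrix ι ι R} (hD : D * D = 1)
    (hDA : D * A * D = -A) (t : R) : det (1 - t • A) = det (1 + t • A) := by
  have hconj : D * (1 + t • A) * D = 1 - t • A := by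
    rw [Matrix.mul_add, Matrix.add_mul, Matrix.mul_one, hD, Matrix.mul_smul, Matrix.smul_mul,
      hDA, smul_neg, ← sub_eq_add_neg]
  have hdetD : det D * det D = 1 := by rw [← det_mul, hD, det_one]
  rw [← hconj, det_mul, det_mul]
  linear_combination det (1 + t • A) * hdetD

lemma det_one_add_smul_mul_det_one_sub_smul {A : Matrix ι ι R} (hA : A * A = 1) (t : R) :
    det (1 + t • A) * det (1 - t • A) = (1 - t ^ 2) ^ Fintype.card ι := by
  have hprod : (1 + t • A) * (1 - t • A) = (1 - t ^ 2) • (1 : Matrix ι ι R) := by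
    simp only [Matrix.mul_sub, Matrix.add_mul, Matrix.one_mul, Matrix.mul_one, Matrix.smul_mul,
      Matrix.mul_smul, hA]
    module
  rw [← det_mul, hprod, det_smul, det_one, mul_one]

lemma diagonal_mul_permMatrix_mul_diagonal_eq_neg (σ : Equiv.Perm ι) {ε : ι → R}
    (hε : ∀ i, ε i * ε (σ i) = -1) :
    diagonal ε * σ.permMatrix R * diagonal ε = -σ.permMatrix R := by
  ext i j
  by_cases h : σ i = j
  · subst h; simp [hε]
  · simp [h]

lemma sq_det_one_add_smul_permMatrix {σ : Equiv.Perm ι} (hσ : Function.Involutive σ)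
    {ε : ι → R} (hε₁ : ∀ i, ε i * ε i = 1) (hε : ∀ i, ε i * ε (σ i) = -1) (t : R) :
    det (1 + t • σ.permMatrix R) ^ 2 = (1 - t ^ 2) ^ Fintype.card ι := by
  have hP : σ.permMatrix R * σ.permMatrix R = 1 := by
    rw [← Matrix.permMatrix_mul, show σ * σ = 1 from Equiv.ext hσ, Matrix.permMatrix_one]
  have hD : diagonal ε * diagonal ε = 1 := by
    rw [diagonal_mul_diagonal, ← diagonal_one]; exact congrArg diagonal (funext hε₁)
  rw [sq, ← det_one_add_smul_mul_det_one_sub_smul hP t,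
    det_one_sub_smul_eq_det_one_add_smul hD (diagonal_mul_permMatrix_mul_diagonal_eq_neg σ hε)]

end InvolutionDet

section Darts

def dartSymmPerm (G : SimpleGraph V) : Equiv.Perm G.Dart :=
  SimpleGraph.Dart.symm_involutive.toPerm _

variable {G : SimpleGraph V} [Fintype V] {R : Type*} [Ring R]

def dartSign (e : G.Dart) : R :=
  if Fintype.equivFin V e.fst < Fintype.equivFin V e.snd then 1 else -1

lemma dartSign_mul_self (e : G.Dart) : (dartSign e : R) * dartSign e = 1 := by
  unfold dartSign; split_ifs <;> simp

lemma dartSign_mul_dartSign_symm (e : G.Dart) : (dartSign e : R) * dartSign e.symm = -1 := by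
  have hne : Fintype.equivFin V e.fst ≠ Fintype.equivFin V e.snd :=
    (Fintype.equivFin V).injective.ne e.adj.ne
  rcases hne.lt_or_gt with h | h <;> simp [dartSign, h, h.not_gt]

variable [DecidableEq V] [DecidableRel G.Adj]

lemma quatArcInvMatrix_eq_permMatrix :
    quatArcInvMatrix G = (dartSymmPerm G).permMatrix (Quaternion ℝ) := by
  ext e f : 1
  simp [quatArcInvMatrix, dartSymmPerm, eq_comm]

lemma det_one_add_smul_psi_quatArcInvMatrix (t : ℂ) :
    det (1 + t • psi (quatArcInvMatrix G)) = (1 - t ^ 2) ^ (2 * G.edgeFinset.card) := by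
  rw [quatArcInvMatrix_eq_permMatrix, psi_permMatrix, ← fromBlocks_one, fromBlocks_smul,
    fromBlocks_add, smul_zero, add_zero, det_fromBlocks_zero₂₁, ← sq,
    ← SimpleGraph.dart_card_eq_twice_card_edges]
  exact sq_det_one_add_smul_permMatrix SimpleGraph.Dart.symm_involutive
    dartSign_mul_self dartSign_mul_dartSign_symm t

end Darts

theorem quat_det_first_reduction_general [Fintype V] [DecidableEq V] (G : SimpleGraph V)
    [DecidableRel G.Adj] (m : ℕ) (hm : m = G.edgeFinset.card)
    (w : G.Dart → Quaternion ℝ) (t : ℂ) (ht : t ^ 2 ≠ 1) :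
    IsUnit ((1 : Matrix (G.Dart ⊕ G.Dart) (G.Dart ⊕ G.Dart) ℂ) +
        t • psi (quatArcInvMatrix G)) ∧
    ((1 : Matrix (G.Dart ⊕ G.Dart) (G.Dart ⊕ G.Dart) ℂ) -
        t • psi (quatKMatrix G w * (quatLMatrix G)ᵀ - quatArcInvMatrix G)).det =
      (1 - t ^ 2) ^ (2 * m) *
        ((1 : Matrix (V ⊕ V) (V ⊕ V) ℂ) -
          t • (psi ((quatLMatrix G)ᵀ) *
            ((1 : Matrix (G.Dart ⊕ G.Dart) (G.Dart ⊕ G.Dart) ℂ) +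
              t • psi (quatArcInvMatrix G))⁻¹ * psi (quatKMatrix G w))).det := by
  set U := (1 : Matrix (G.Dart ⊕ G.Dart) (G.Dart ⊕ G.Dart) ℂ) + t • psi (quatArcInvMatrix G)
  have hdetU : U.det = (1 - t ^ 2) ^ (2 * m) := by
    rw [hm, det_one_add_smul_psi_quatArcInvMatrix]
  have hU : IsUnit U.det := by
    rw [hdetU]
    exact (pow_ne_zero _ (sub_ne_zero.mpr (Ne.symm ht))).isUnit
  refine ⟨(isUnit_iff_isUnit_det U).mpr hU, ?_⟩
  have hsplit : 1 - t • psi (quatKMatrix G w * (quatLMatrix G)ᵀ - quatArcInvMatrix G) =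
      U + (-t • psi (quatKMatrix G w)) * psi (quatLMatrix G)ᵀ := by
    rw [psi_sub, psi_mul, smul_sub, Matrix.smul_mul]
    module
  rw [hsplit, det_add_mul _ _ hU, hdetU, Matrix.mul_smul, neg_smul, ← sub_eq_add_neg]

/-- for t ∈ ℂ with t² ≠ 1, the matrix I_{4m} + tψ(J₀) is invertible and
det(I_{4m} − tψ(K·ᵀL − J₀)) = (1−t²)^{2m}·det(I_{2n} − tψ(ᵀL)(I_{4m} + tψ(J₀))⁻¹ψ(K)). -/
theorem quat_det_first_reduction [Fintype V] [DecidableEq V] (G : SimpleGraph V)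
    [DecidableRel G.Adj] (hG : G.Connected) (m : ℕ) (hm : m = G.edgeFinset.card)
    (w : G.Dart → Quaternion ℝ) (t : ℂ) (ht : t ^ 2 ≠ 1) :
    IsUnit ((1 : Matrix (G.Dart ⊕ G.Dart) (G.Dart ⊕ G.Dart) ℂ) +
        t • psi (quatArcInvMatrix G)) ∧
    ((1 : Matrix (G.Dart ⊕ G.Dart) (G.Dart ⊕ G.Dart) ℂ) -
        t • psi (quatKMatrix G w * (quatLMatrix G)ᵀ - quatArcInvMatrix G)).det =
      (1 - t ^ 2) ^ (2 * m) *
        ((1 : Matrix (V ⊕ V) (V ⊕ V) ℂ) -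
          t • (psi ((quatLMatrix G)ᵀ) *
            ((1 : Matrix (G.Dart ⊕ G.Dart) (G.Dart ⊕ G.Dart) ℂ) +
              t • psi (quatArcInvMatrix G))⁻¹ * psi (quatKMatrix G w))).det :=
  quat_det_first_reduction_general G m hm w t ht
end
end
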